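/- If (x; x_1,...,x_n) ∈ C, then (x; x_i)·(d; d_i) ≥ 0 for every (d; d_1,...,d_n) ∈ F⁺, i.e. for every vector with nonnegative integer entries satisfying (d; d_i)·(−K + (d; d_i)) ≥ 0 (equivalently, Σ_i (d_i² + d_i) ≤ d² + 3d). -/
import Mathlib


/-- The product `(x; x_i)·(y; y_i) = x*y - ∑ i, x_i * y_i` on `ℝ^{1+(n+3)}`. -/
def dotp {n : ℕ} (x y : ℝ × (Fin (n + 3) → ℝ)) : ℝ :=
  x.1 * y.1 - ∑ i, x.2 i * y.2 i

/-- The vector `-K = (3; 1, 1, …, 1)`. -/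
def negK {n : ℕ} : ℝ × (Fin (n + 3) → ℝ) := (3, fun _ => 1)

/-- The Cremona transform. -/
def Cr {n : ℕ} (d : ℝ × (Fin (n + 3) → ℝ)) : ℝ × (Fin (n + 3) → ℝ) :=
  (2 * d.1 - d.2 0 - d.2 1 - d.2 2,
    fun i =>
      if i = 0 then d.1 - d.2 1 - d.2 2
      else if i = 1 then d.1 - d.2 0 - d.2 2
      else if i = 2 then d.1 - d.2 0 - d.2 1
      else d.2 i)

/-- A vector is positive if all its entries are nonnegative. -/
def PositiveVec {n : ℕ} (d : ℝ × (Fin (n + 3) → ℝ)) : Prop :=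
  0 ≤ d.1 ∧ ∀ i, 0 ≤ d.2 i

/-- A vector is ordered if `d_i ≥ d_{i+1}` whenever both are nonzero, and nonzero
entries precede zero entries. -/
def OrderedVec {n : ℕ} (d : ℝ × (Fin (n + 3) → ℝ)) : Prop :=
  (∀ (i : ℕ) (h1 : i < n + 3) (h2 : i + 1 < n + 3),
      d.2 ⟨i, h1⟩ ≠ 0 → d.2 ⟨i + 1, h2⟩ ≠ 0 → d.2 ⟨i + 1, h2⟩ ≤ d.2 ⟨i, h1⟩) ∧
  (∀ i j : Fin (n + 3), d.2 i ≠ 0 → d.2 j = 0 → i < j)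

/-- A vector is reduced if it is positive, ordered, and `d ≥ d_1 + d_2 + d_3`. -/
def ReducedVec {n : ℕ} (d : ℝ × (Fin (n + 3) → ℝ)) : Prop :=
  PositiveVec d ∧ OrderedVec d ∧ d.2 0 + d.2 1 + d.2 2 ≤ d.1

/-- A vector has integer entries. -/
def IntVec {n : ℕ} (d : ℝ × (Fin (n + 3) → ℝ)) : Prop :=
  (∃ z : ℤ, d.1 = z) ∧ ∀ i, ∃ z : ℤ, d.2 i = z

/-- The set `E` of integer vectors with `(d;d_i)·(d;d_i) ≥ -1` and `-K·(d;d_i) = 1`. -/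
def ESet {n : ℕ} : Set (ℝ × (Fin (n + 3) → ℝ)) :=
  {d | IntVec d ∧ -1 ≤ dotp d d ∧ dotp negK d = 1}

/-- The set `C` of integer vectors with `(x;x_i)·(x;x_i) ≥ 0` that pair nonnegatively
with every element of `E`. -/
def CSet {n : ℕ} : Set (ℝ × (Fin (n + 3) → ℝ)) :=
  {x | IntVec x ∧ 0 ≤ dotp x x ∧ ∀ d ∈ ESet, 0 ≤ dotp x d}

namespace CFplus

variable {n : ℕ}

/-- generalized Cremona transform at indices i j k -/
def Crg (i j k : Fin (n + 3)) (d : ℝ × (Fin (n + 3) → ℝ)) : ℝ × (Fin (n + 3) → ℝ) :=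
  (2 * d.1 - d.2 i - d.2 j - d.2 k,
    fun l =>
      if l = i then d.1 - d.2 j - d.2 k
      else if l = j then d.1 - d.2 i - d.2 k
      else if l = k then d.1 - d.2 i - d.2 j
      else d.2 l)

variable {i j k : Fin (n + 3)}

lemma sum_split (hij : i ≠ j) (hik : i ≠ k) (hjk : j ≠ k) (f : Fin (n + 3) → ℝ) :
    ∑ l, f l = f i + f j + f k + ∑ l ∈ Finset.univ \ {i, j, k}, f l := by
  have hsub : ({i, j, k} : Finset (Fin (n+3))) ⊆ Finset.univ := Finset.subset_univ _
  rw [← Finset.sum_sdiff hsub]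
  have : ∑ l ∈ ({i, j, k} : Finset (Fin (n+3))), f l = f i + f j + f k := by
    rw [Finset.sum_insert (by simp [hij, hik]), Finset.sum_insert (by simp [hjk]),
      Finset.sum_singleton]
    ring
  rw [this]; ring

lemma Crg_apply_i (d : ℝ × (Fin (n + 3) → ℝ)) : (Crg i j k d).2 i = d.1 - d.2 j - d.2 k := by
  simp [Crg]

lemma Crg_apply_j (hij : i ≠ j) (d : ℝ × (Fin (n + 3) → ℝ)) :
    (Crg i j k d).2 j = d.1 - d.2 i - d.2 k := by
  simp [Crg, Ne.symm hij]

lemma Crg_apply_k (hik : i ≠ k) (hjk : j ≠ k) (d : ℝ × (Fin (n + 3) → ℝ)) :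
    (Crg i j k d).2 k = d.1 - d.2 i - d.2 j := by
  simp [Crg, Ne.symm hik, Ne.symm hjk]

lemma Crg_apply_other {l : Fin (n + 3)} (hli : l ≠ i) (hlj : l ≠ j) (hlk : l ≠ k)
    (d : ℝ × (Fin (n + 3) → ℝ)) : (Crg i j k d).2 l = d.2 l := by
  simp [Crg, hli, hlj, hlk]

lemma dotp_Crg (hij : i ≠ j) (hik : i ≠ k) (hjk : j ≠ k) (x y : ℝ × (Fin (n + 3) → ℝ)) :
    dotp (Crg i j k x) (Crg i j k y) = dotp x y := by
  unfold dotp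
  rw [sum_split hij hik hjk (fun l => (Crg i j k x).2 l * (Crg i j k y).2 l),
    sum_split hij hik hjk (fun l => x.2 l * y.2 l)]
  have he : ∑ l ∈ Finset.univ \ {i, j, k}, (Crg i j k x).2 l * (Crg i j k y).2 l
      = ∑ l ∈ Finset.univ \ {i, j, k}, x.2 l * y.2 l := by
    apply Finset.sum_congr rfl
    intro l hl
    simp only [Finset.mem_sdiff, Finset.mem_insert, Finset.mem_singleton] at hl
    push_neg at hl
    rw [Crg_apply_other hl.2.1 hl.2.2.1 hl.2.2.2, Crg_apply_other hl.2.1 hl.2.2.1 hl.2.2.2]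
  rw [he, Crg_apply_i, Crg_apply_i, Crg_apply_j hij, Crg_apply_j hij,
    Crg_apply_k hik hjk, Crg_apply_k hik hjk]
  show (2 * x.1 - x.2 i - x.2 j - x.2 k) * (2 * y.1 - y.2 i - y.2 j - y.2 k) - _ = _
  ring

lemma Crg_negK (hij : i ≠ j) (hik : i ≠ k) (hjk : j ≠ k) :
    Crg i j k (negK : ℝ × (Fin (n + 3) → ℝ)) = negK := by
  unfold Crg negK
  refine Prod.ext (by norm_num) ?_
  funext l
  by_cases h1 : l = i <;> by_cases h2 : l = j <;> by_cases h3 : l = k <;> simp [h1, h2, h3] <;> norm_num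

lemma Crg_invol (hij : i ≠ j) (hik : i ≠ k) (hjk : j ≠ k) (d : ℝ × (Fin (n + 3) → ℝ)) :
    Crg i j k (Crg i j k d) = d := by
  have hi := Crg_apply_i (i := i) (j := j) (k := k) d
  have hj := Crg_apply_j (k := k) hij d
  have hk := Crg_apply_k (j := j) hik hjk d
  refine Prod.ext ?_ ?_
  · show 2 * (2 * d.1 - d.2 i - d.2 j - d.2 k) - _ - _ - _ = d.1
    rw [hi, hj, hk]; ring
  · funext l
    by_cases h1 : l = i
    · rw [h1]; rw [Crg_apply_i, Crg_apply_j hij, Crg_apply_k hik hjk]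
      show 2 * d.1 - d.2 i - d.2 j - d.2 k - _ - _ = d.2 i
      ring
    · by_cases h2 : l = j
      · rw [h2]; rw [Crg_apply_j hij, Crg_apply_i, Crg_apply_k hik hjk]
        show 2 * d.1 - d.2 i - d.2 j - d.2 k - _ - _ = d.2 j
        ring
      · by_cases h3 : l = k
        · rw [h3]; rw [Crg_apply_k hik hjk, Crg_apply_i, Crg_apply_j hij]
          show 2 * d.1 - d.2 i - d.2 j - d.2 k - _ - _ = d.2 k
          ring
        · rw [Crg_apply_other h1 h2 h3, Crg_apply_other h1 h2 h3]

lemma Crg_intVec {d : ℝ × (Fin (n + 3) → ℝ)} (hd : IntVec d) : IntVec (Crg i j k d) := by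
  obtain ⟨⟨z, hz⟩, hent⟩ := hd
  choose f hf using hent
  constructor
  · exact ⟨2 * z - f i - f j - f k, by
      show 2 * d.1 - d.2 i - d.2 j - d.2 k = _
      rw [hz, hf, hf, hf]; push_cast; ring⟩
  · intro l
    show ∃ w : ℤ, (if l = i then d.1 - d.2 j - d.2 k
      else if l = j then d.1 - d.2 i - d.2 k
      else if l = k then d.1 - d.2 i - d.2 j
      else d.2 l) = w
    split_ifs with h1 h2 h3
    · exact ⟨z - f j - f k, by rw [hz, hf, hf]; push_cast; ring⟩
    · exact ⟨z - f i - f k, by rw [hz, hf, hf]; push_cast; ring⟩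
    · exact ⟨z - f i - f j, by rw [hz, hf, hf]; push_cast; ring⟩
    · exact ⟨f l, hf l⟩

lemma Crg_mem_E (hij : i ≠ j) (hik : i ≠ k) (hjk : j ≠ k) {e : ℝ × (Fin (n + 3) → ℝ)}
    (he : e ∈ (ESet : Set (ℝ × (Fin (n + 3) → ℝ)))) : Crg i j k e ∈ ESet := by
  obtain ⟨hint, hself, hK⟩ := he
  refine ⟨Crg_intVec hint, ?_, ?_⟩
  · rw [dotp_Crg hij hik hjk]; exact hself
  · calc dotp negK (Crg i j k e) = dotp (Crg i j k negK) (Crg i j k e) := by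
          rw [Crg_negK hij hik hjk]
      _ = dotp negK e := dotp_Crg hij hik hjk _ _
      _ = 1 := hK

lemma Crg_mem_C (hij : i ≠ j) (hik : i ≠ k) (hjk : j ≠ k) {x : ℝ × (Fin (n + 3) → ℝ)}
    (hx : x ∈ (CSet : Set (ℝ × (Fin (n + 3) → ℝ)))) : Crg i j k x ∈ CSet := by
  obtain ⟨hint, hself, hE⟩ := hx
  refine ⟨Crg_intVec hint, ?_, ?_⟩
  · rw [dotp_Crg hij hik hjk]; exact hself
  · intro e he
    have : dotp (Crg i j k x) e = dotp x (Crg i j k e) := by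
      conv_lhs => rw [← Crg_invol hij hik hjk e]
      exact dotp_Crg hij hik hjk x (Crg i j k e)
    rw [this]
    exact hE _ (Crg_mem_E hij hik hjk he)



/-- the class (0; …, -1, …) -/
def negE (i : Fin (n + 3)) : ℝ × (Fin (n + 3) → ℝ) :=
  (0, fun l => if l = i then -1 else 0)

lemma negE_mem (i : Fin (n + 3)) : negE i ∈ (ESet : Set (ℝ × (Fin (n + 3) → ℝ))) := by
  refine ⟨⟨⟨0, by simp [negE]⟩, fun l => ?_⟩, ?_, ?_⟩
  · by_cases h : l = i
    · exact ⟨-1, by simp [negE, h]⟩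
    · exact ⟨0, by simp [negE, h]⟩
  · simp [dotp, negE, ite_mul, Finset.sum_ite_eq']
  · simp [dotp, negE, negK, mul_ite, Finset.sum_ite_eq']

/-- the class (1; …, 1, …, 1, …) with 1s at i and j -/
def lineE (i j : Fin (n + 3)) : ℝ × (Fin (n + 3) → ℝ) :=
  (1, fun l => (if l = i then 1 else 0) + if l = j then 1 else 0)

lemma lineE_mem {i j : Fin (n + 3)} (hij : i ≠ j) :
    lineE i j ∈ (ESet : Set (ℝ × (Fin (n + 3) → ℝ))) := by
  have hsum : ∀ y : Fin (n + 3) → ℝ,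
      ∑ l, y l * (lineE i j).2 l = y i + y j := by
    intro y
    simp only [lineE, mul_add, mul_ite, mul_one, mul_zero]
    rw [Finset.sum_add_distrib]
    simp [Finset.sum_ite_eq']
  refine ⟨⟨⟨1, by simp [lineE]⟩, fun l => ?_⟩, ?_, ?_⟩
  · refine ⟨(if l = i then 1 else 0) + (if l = j then 1 else 0 : ℤ), ?_⟩
    simp only [lineE]
    push_cast
    split_ifs <;> norm_num
  · have := hsum (lineE i j).2
    unfold dotp
    rw [this]
    simp [lineE, hij, Ne.symm hij]
  · unfold dotp
    rw [hsum (negK).2]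
    norm_num [negK, lineE]

lemma C_entry_nonneg {x : ℝ × (Fin (n + 3) → ℝ)}
    (hx : x ∈ (CSet : Set (ℝ × (Fin (n + 3) → ℝ)))) (i : Fin (n + 3)) : 0 ≤ x.2 i := by
  have h := hx.2.2 _ (negE_mem i)
  have : dotp x (negE i) = x.2 i := by
    simp [dotp, negE, mul_ite, Finset.sum_ite_eq']
  linarith [h, this.symm.le, this.le]

lemma C_pair_le {x : ℝ × (Fin (n + 3) → ℝ)}
    (hx : x ∈ (CSet : Set (ℝ × (Fin (n + 3) → ℝ)))) {i j : Fin (n + 3)} (hij : i ≠ j) :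
    x.2 i + x.2 j ≤ x.1 := by
  have h := hx.2.2 _ (lineE_mem hij)
  have : dotp x (lineE i j) = x.1 - (x.2 i + x.2 j) := by
    unfold dotp lineE
    simp only [mul_add, mul_ite, mul_one, mul_zero]
    rw [Finset.sum_add_distrib]
    simp [Finset.sum_ite_eq']
  rw [this] at h
  linarith

lemma C_head_nonneg {x : ℝ × (Fin (n + 3) → ℝ)}
    (hx : x ∈ (CSet : Set (ℝ × (Fin (n + 3) → ℝ)))) : 0 ≤ x.1 := by
  have h01 : (0 : Fin (n + 3)) ≠ 1 := by
    simp [Fin.ext_iff]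
  have := C_pair_le hx h01
  have h0 := C_entry_nonneg hx 0
  have h1 := C_entry_nonneg hx 1
  linarith

/-- reverse Cauchy–Schwarz -/
lemma dotp_nonneg_of_sq {x d : ℝ × (Fin (n + 3) → ℝ)} (hx1 : 0 ≤ x.1) (hd1 : 0 ≤ d.1)
    (hx : 0 ≤ dotp x x) (hd : 0 ≤ dotp d d) : 0 ≤ dotp x d := by
  have hcs := Finset.sum_mul_sq_le_sq_mul_sq Finset.univ x.2 d.2
  have hsq : ∀ y : ℝ × (Fin (n + 3) → ℝ), 0 ≤ dotp y y → ∑ l, y.2 l ^ 2 ≤ y.1 ^ 2 := by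
    intro y hy
    unfold dotp at hy
    have he : ∑ l, y.2 l * y.2 l = ∑ l, y.2 l ^ 2 :=
      Finset.sum_congr rfl fun l _ => (pow_two (y.2 l)).symm
    nlinarith [hy, he]
  have hx2 := hsq x hx
  have hd2 := hsq d hd
  have hsum_nonneg : (0 : ℝ) ≤ ∑ l, d.2 l ^ 2 := Finset.sum_nonneg fun l _ => sq_nonneg _
  have h2 : (∑ l, x.2 l * d.2 l) ^ 2 ≤ x.1 ^ 2 * d.1 ^ 2 :=
    le_trans hcs (mul_le_mul hx2 hd2 hsum_nonneg (sq_nonneg _))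
  unfold dotp
  nlinarith [h2, mul_nonneg hx1 hd1]


/-- the F⁺ quantity -/
def Fq (d : ℝ × (Fin (n + 3) → ℝ)) : ℝ := dotp negK d + dotp d d

lemma Fq_expand (d : ℝ × (Fin (n + 3) → ℝ)) :
    Fq d = 3 * d.1 + d.1 * d.1 - ∑ l, (d.2 l + d.2 l * d.2 l) := by
  unfold Fq dotp negK
  rw [Finset.sum_add_distrib]
  simp only [one_mul]
  ring

lemma exists_int_ge_succ {a b : ℤ} {x y : ℝ} (hx : x = a) (hy : y = b) (h : y < x) :
    y + 1 ≤ x := by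
  rw [hx, hy] at h ⊢
  have : b < a := by exact_mod_cast h
  have : b + 1 ≤ a := this
  exact_mod_cast this

/-- triple bound: for F⁺ positive vectors, any three entries sum to at most `2 d`. -/
lemma triple_le {d : ℝ × (Fin (n + 3) → ℝ)} (hdint : IntVec d) (hpos : ∀ l, 0 ≤ d.2 l)
    (hd1 : 0 ≤ d.1) (hF : 0 ≤ Fq d) {i j k : Fin (n + 3)} (hij : i ≠ j) (hik : i ≠ k)
    (hjk : j ≠ k) : d.2 i + d.2 j + d.2 k ≤ 2 * d.1 := by
  by_contra hcon
  push_neg at hcon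
  rw [Fq_expand, sum_split hij hik hjk] at hF
  have hrest : 0 ≤ ∑ l ∈ Finset.univ \ {i, j, k}, (d.2 l + d.2 l * d.2 l) :=
    Finset.sum_nonneg fun l _ => by nlinarith [hpos l]
  obtain ⟨⟨z, hz⟩, hent⟩ := hdint
  obtain ⟨zi, hzi⟩ := hent i
  obtain ⟨zj, hzj⟩ := hent j
  obtain ⟨zk, hzk⟩ := hent k
  have hsucc : 2 * d.1 + 1 ≤ d.2 i + d.2 j + d.2 k := by
    have := exists_int_ge_succ (a := zi + zj + zk) (b := 2 * z)
      (x := d.2 i + d.2 j + d.2 k) (y := 2 * d.1) (by rw [hzi, hzj, hzk]; push_cast; ring)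
      (by rw [hz]; push_cast; ring) hcon
    linarith
  nlinarith [sq_nonneg (d.2 i - d.2 j), sq_nonneg (d.2 i - d.2 k), sq_nonneg (d.2 j - d.2 k),
    hpos i, hpos j, hpos k, hd1]

/-- reduced case: the self-intersection is nonnegative. -/
lemma reduced_dotp_nonneg {d : ℝ × (Fin (n + 3) → ℝ)} (hpos : ∀ l, 0 ≤ d.2 l)
    (hd1 : 0 ≤ d.1) (hF : 0 ≤ Fq d) {i j k : Fin (n + 3)} (hij : i ≠ j) (hik : i ≠ k)
    (hjk : j ≠ k) (hba : d.2 j ≤ d.2 i) (hcb : d.2 k ≤ d.2 j)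
    (hmax : ∀ l, l ≠ i → l ≠ j → d.2 l ≤ d.2 k)
    (habc : d.2 i + d.2 j + d.2 k ≤ d.1) : 0 ≤ dotp d d := by
  set a := d.2 i with ha
  set b := d.2 j with hb
  set c := d.2 k with hc
  set D := d.1 with hD
  have hq : ∑ l, d.2 l * d.2 l ≤ D * D := by
    by_contra hcon
    push_neg at hcon
    rw [Fq_expand, sum_split hij hik hjk] at hF
    rw [sum_split hij hik hjk (fun l => d.2 l * d.2 l)] at hcon
    set q' := ∑ l ∈ Finset.univ \ {i, j, k}, d.2 l * d.2 l with hq'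
    set u' := ∑ l ∈ Finset.univ \ {i, j, k}, d.2 l with hu'
    have hsplit : ∑ l ∈ Finset.univ \ {i, j, k}, (d.2 l + d.2 l * d.2 l) = u' + q' := by
      rw [hq', hu', ← Finset.sum_add_distrib]
    rw [hsplit] at hF
    have hq'u : q' ≤ c * u' := by
      rw [hq', hu', Finset.mul_sum]
      refine Finset.sum_le_sum fun l hl => ?_
      simp only [Finset.mem_sdiff, Finset.mem_insert, Finset.mem_singleton] at hl
      push_neg at hl
      exact mul_le_mul_of_nonneg_right (hmax l hl.2.1 hl.2.2.1) (hpos l)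
    have hu'0 : 0 ≤ u' := Finset.sum_nonneg fun l _ => hpos l
    have hq'0 : 0 ≤ q' := Finset.sum_nonneg fun l _ => mul_self_nonneg _
    have hc0 : 0 ≤ c := hpos k
    have hb0 : 0 ≤ b := hpos j
    have ha0 : 0 ≤ a := hpos i
    rcases eq_or_lt_of_le hc0 with hc | hc
    · -- c = 0
      have hu'z : c * u' = 0 := by rw [← hc]; ring
      nlinarith [hq'u, hq'0, hcon, habc]
    · -- c > 0
      have hcu1 : D * D - a * a - b * b - c * c < c * u' := by nlinarith [hq'u, hcon]
      have hu2 : u' < 3 * D - a - b - c := by nlinarith [hF]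
      have hcu2 : c * u' < c * (3 * D - a - b - c) := by
        exact mul_lt_mul_of_pos_left hu2 hc
      have hlt : D * D - a * a - b * b < 3 * c * D - c * a - c * b := by nlinarith
      have he : 0 ≤ D - (a + b + c) := by linarith
      have hcc : c * c ≤ a * b :=
        mul_le_mul (le_trans hcb hba) hcb hc0 (le_trans hc0 (le_trans hcb hba))
      nlinarith [hlt, hcc, mul_nonneg he (show 0 ≤ 2 * a + 2 * b - c by linarith),
        sq_nonneg (D - (a + b + c))]
  unfold dotp
  linarith

/-- per-entry truncation inequality (needs integrality) -/
lemma trunc_entry {t : ℝ} (hint : ∃ z : ℤ, t = z) :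
    max t 0 + max t 0 * max t 0 ≤ t + t * t := by
  rcases le_or_gt 0 t with h | h
  · rw [max_eq_left h]
  · rw [max_eq_right h.le]
    obtain ⟨z, hz⟩ := hint
    have hz0 : z < 0 := by exact_mod_cast hz ▸ h
    have hz1 : (z : ℝ) ≤ -1 := by
      have : z ≤ -1 := by omega
      exact_mod_cast this
    rw [hz] at *
    nlinarith

/-- main induction -/
lemma main_induction : ∀ m : ℕ, ∀ x ∈ (CSet : Set (ℝ × (Fin (n + 3) → ℝ))),
    ∀ d : ℝ × (Fin (n + 3) → ℝ), IntVec d → (∀ l, 0 ≤ d.2 l) → 0 ≤ d.1 → 0 ≤ Fq d →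
    d.1 = (m : ℝ) → 0 ≤ dotp x d := by
  intro m
  induction m using Nat.strong_induction_on with
  | _ m IH =>
  intro x hx d hdint hdpos hd1 hdF hdm
  -- find the three largest entries
  obtain ⟨i, -, hi⟩ := Finset.exists_max_image Finset.univ d.2 Finset.univ_nonempty
  have hne2 : (Finset.univ.erase i).Nonempty := by
    rw [← Finset.card_pos, Finset.card_erase_of_mem (Finset.mem_univ i)]
    simp [Finset.card_univ]
  obtain ⟨j, hjmem, hj⟩ := Finset.exists_max_image _ d.2 hne2
  have hne3 : ((Finset.univ.erase i).erase j).Nonempty := by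
    rw [← Finset.card_pos, Finset.card_erase_of_mem (Finset.mem_erase.2 ⟨Finset.mem_erase.1 hjmem |>.1, Finset.mem_univ j⟩),
      Finset.card_erase_of_mem (Finset.mem_univ i)]
    simp [Finset.card_univ]
  obtain ⟨k, hkmem, hk⟩ := Finset.exists_max_image _ d.2 hne3
  have hji : j ≠ i := (Finset.mem_erase.1 hjmem).1
  have hkj : k ≠ j := (Finset.mem_erase.1 hkmem).1
  have hki : k ≠ i := (Finset.mem_erase.1 (Finset.mem_erase.1 hkmem).2).1
  have hij : i ≠ j := hji.symm
  have hik : i ≠ k := hki.symm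
  have hjk : j ≠ k := hkj.symm
  have hba : d.2 j ≤ d.2 i := hi j (Finset.mem_univ j)
  have hcb : d.2 k ≤ d.2 j := hj k (Finset.mem_erase.1 hkmem).2
  have hmax : ∀ l, l ≠ i → l ≠ j → d.2 l ≤ d.2 k := fun l h1 h2 =>
    hk l (Finset.mem_erase.2 ⟨h2, Finset.mem_erase.2 ⟨h1, Finset.mem_univ l⟩⟩)
  by_cases hcase : d.2 i + d.2 j + d.2 k ≤ d.1
  · -- reduced case: Cauchy–Schwarz
    exact dotp_nonneg_of_sq (C_head_nonneg hx) hd1 hx.2.1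
      (reduced_dotp_nonneg hdpos hd1 hdF hij hik hjk hba hcb hmax hcase)
  · -- Cremona reduction
    push_neg at hcase
    set x' := Crg i j k x with hx'def
    set d' := Crg i j k d with hd'def
    set d'' : ℝ × (Fin (n + 3) → ℝ) := (d'.1, fun l => max (d'.2 l) 0) with hd''def
    have hx'C : x' ∈ (CSet : Set (ℝ × (Fin (n + 3) → ℝ))) := Crg_mem_C hij hik hjk hx
    have hd'int : IntVec d' := Crg_intVec hdint
    have hd'1 : d'.1 = 2 * d.1 - d.2 i - d.2 j - d.2 k := rfl
    have hd''1 : 0 ≤ d''.1 := by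
      rw [hd''def]
      have := triple_le hdint hdpos hd1 hdF hij hik hjk
      show (0:ℝ) ≤ d'.1
      rw [hd'1]; linarith
    have hd''int : IntVec d'' := by
      refine ⟨hd'int.1, fun l => ?_⟩
      obtain ⟨z, hz⟩ := hd'int.2 l
      exact ⟨max z 0, by show max (d'.2 l) 0 = _; rw [hz]; push_cast; rfl⟩
    have hd''pos : ∀ l, 0 ≤ d''.2 l := fun l => le_max_right _ _
    -- F⁺ is preserved
    have hFd' : Fq d' = Fq d := by
      unfold Fq
      rw [hd'def, dotp_Crg hij hik hjk]
      congr 1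
      conv_lhs => rw [show (negK : ℝ × (Fin (n + 3) → ℝ)) = Crg i j k negK from
        (Crg_negK hij hik hjk).symm]
      exact dotp_Crg hij hik hjk negK d
    have hFd'' : Fq d' ≤ Fq d'' := by
      rw [Fq_expand, Fq_expand]
      have h1 : d''.1 = d'.1 := rfl
      rw [h1]
      have hsum : ∑ l, (d''.2 l + d''.2 l * d''.2 l) ≤ ∑ l, (d'.2 l + d'.2 l * d'.2 l) :=
        Finset.sum_le_sum fun l _ => trunc_entry (hd'int.2 l)
      linarith
    -- the measure decreases
    obtain ⟨z'', hz''⟩ := hd''int.1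
    have hz''0 : 0 ≤ z'' := by exact_mod_cast hz'' ▸ hd''1
    have hz''m : z'' < (m : ℤ) := by
      have hlt : d''.1 < (m : ℝ) := by
        show d'.1 < (m : ℝ)
        rw [hd'1, ← hdm]
        linarith
      rw [hz''] at hlt
      exact_mod_cast hlt
    have hm' : d''.1 = ((z''.toNat : ℕ) : ℝ) := by
      rw [hz'']
      congr 1
      exact_mod_cast (Int.toNat_of_nonneg hz''0).symm
    have hm'lt : z''.toNat < m := by omega
    have hrec : 0 ≤ dotp x' d'' :=
      IH z''.toNat hm'lt x' hx'C d'' hd''int hd''pos (hz'' ▸ by exact_mod_cast hz''0) 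
        (le_trans (hFd'.symm ▸ hdF) hFd'') hm'
    have hstep : dotp x' d'' ≤ dotp x' d' := by
      unfold dotp
      have h1 : d''.1 = d'.1 := rfl
      rw [h1]
      have : ∑ l, x'.2 l * d'.2 l ≤ ∑ l, x'.2 l * d''.2 l :=
        Finset.sum_le_sum fun l _ =>
          mul_le_mul_of_nonneg_left (le_max_left _ _) (C_entry_nonneg hx'C l)
      linarith
    have hfin : dotp x' d' = dotp x d := dotp_Crg hij hik hjk x d
    linarith

end CFplus

theorem C_pairs_nonneg_with_Fplus {n : ℕ} (x : ℝ × (Fin (n + 3) → ℝ)) (hx : x ∈ CSet)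
    (d : ℝ × (Fin (n + 3) → ℝ)) (hdint : IntVec d) (hdpos : PositiveVec d)
    (hdF : 0 ≤ dotp d ((negK : ℝ × (Fin (n + 3) → ℝ)).1 + d.1,
      fun i => (negK : ℝ × (Fin (n + 3) → ℝ)).2 i + d.2 i)) :
    0 ≤ dotp x d := by
  have hF : 0 ≤ CFplus.Fq d := by
    have heq : dotp d ((negK : ℝ × (Fin (n + 3) → ℝ)).1 + d.1,
        fun i => (negK : ℝ × (Fin (n + 3) → ℝ)).2 i + d.2 i) = CFplus.Fq d := by
      rw [CFplus.Fq_expand]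
      show d.1 * ((3:ℝ) + d.1) - ∑ l, d.2 l * ((1:ℝ) + d.2 l) = _
      have : ∑ l, d.2 l * ((1:ℝ) + d.2 l) = ∑ l, (d.2 l + d.2 l * d.2 l) :=
        Finset.sum_congr rfl fun l _ => by ring
      rw [this]
      ring
    rw [← heq]; exact hdF
  obtain ⟨z, hz⟩ := hdint.1
  have hz0 : 0 ≤ z := by exact_mod_cast hz ▸ hdpos.1
  have hm : d.1 = ((z.toNat : ℕ) : ℝ) := by
    rw [hz]; congr 1; exact_mod_cast (Int.toNat_of_nonneg hz0).symm
  exact CFplus.main_induction z.toNat x hx d hdint hdpos.2 hdpos.1 hF hm
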